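/- Jump law of the co-state for a time-varying switching interface: Let λ₁, λ₂, f₁, f₂, m ∈ ℝⁿ, let L₁, L₂, p₁, p₂, μ, ν ∈ ℝ, and write Δλ = λ₂ − λ₁, Δf = f₂ − f₁, ΔL = L₂ − L₁, ⟨f⟩ = (f₁ + f₂)/2, ⟨λ⟩ = (λ₁ + λ₂)/2. Assume (i) continuity of the augmented Hamiltonian: L₂ + ⟪λ₂, f₂⟫ + p₂ = L₁ + ⟪λ₁, f₁⟫ + p₁, (ii) the augmented co-state jump is parallel to the augmented interface gradient (m, μ): Δλ = ν • m and p₂ − p₁ = ν · μ, and (iii) ⟪m, ⟨f⟩⟫ + μ ≠ 0. Then Δλ = −((ΔL + ⟪⟨λ⟩, Δf⟫) / (⟪m, ⟨f⟩⟫ + μ)) • m. -/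

import Mathlib

/-! The jump of the augmented Hamiltonian splits, by the discrete product rule
`⟪λ₂, f₂⟫ - ⟪λ₁, f₁⟫ = ⟪⟨λ⟩, Δf⟫ + ⟪Δλ, ⟨f⟩⟫`, into a part independent of the co-state jump and
the part `ν (⟪m, ⟨f⟩⟫ + μ)` contributed by the jump `ν • (m, μ)`. Continuity of the Hamiltonian
makes these cancel, which determines `ν` whenever `⟪m, ⟨f⟩⟫ + μ ≠ 0`. -/

open RealInnerProductSpace

theorem inner_sub_inner_eq_inner_average_add_inner_average {E : Type*} [NormedAddCommGroup E]
    [InnerProductSpace ℝ E] (a₁ a₂ b₁ b₂ : E) :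
    ⟪a₂, b₂⟫ - ⟪a₁, b₁⟫ =
      ⟪(2 : ℝ)⁻¹ • (a₁ + a₂), b₂ - b₁⟫ + ⟪a₂ - a₁, (2 : ℝ)⁻¹ • (b₁ + b₂)⟫ := by
  simp only [inner_add_left, inner_add_right, inner_sub_left, inner_sub_right,
    real_inner_smul_left, real_inner_smul_right]
  ring

/-- Jump law of the co-state for a time-varying switching interface:
Δλ = −((ΔL + ⟪⟨λ⟩, Δf⟫) / (⟪m, ⟨f⟩⟫ + μ)) • m. -/
theorem costate_jump_law_time_varying (n : ℕ)
    (l₁ l₂ f₁ f₂ m : EuclideanSpace ℝ (Fin n)) (L₁ L₂ p₁ p₂ μ ν : ℝ)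
    (hH : L₂ + ⟪l₂, f₂⟫ + p₂ = L₁ + ⟪l₁, f₁⟫ + p₁)
    (hpar : l₂ - l₁ = ν • m) (hpar' : p₂ - p₁ = ν * μ)
    (hne : ⟪m, (2 : ℝ)⁻¹ • (f₁ + f₂)⟫ + μ ≠ 0) :
    l₂ - l₁ =
      (-(((L₂ - L₁) + ⟪(2 : ℝ)⁻¹ • (l₁ + l₂), f₂ - f₁⟫) /
          (⟪m, (2 : ℝ)⁻¹ • (f₁ + f₂)⟫ + μ))) • m := by
  have hjump : ν * (⟪m, (2 : ℝ)⁻¹ • (f₁ + f₂)⟫ + μ) =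
      -((L₂ - L₁) + ⟪(2 : ℝ)⁻¹ • (l₁ + l₂), f₂ - f₁⟫) := by
    have hprod := inner_sub_inner_eq_inner_average_add_inner_average l₁ l₂ f₁ f₂
    rw [hpar, real_inner_smul_left m] at hprod
    linarith
  rw [hpar, ← neg_div, (eq_div_iff hne).mpr hjump]
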